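/- Every matroid congestion game with mixed and set-functional costs whose cost functions have monotone dependence has a pure Nash equilibrium. -/

import Mathlib

open Finset

/-- A matroid on the (finite) ground set `E`, given by its base family `B`:
a nonempty family of finite subsets of `E` satisfying the exchange axiom (EX). -/
def IsBaseFamily {E : Type*} [DecidableEq E] (B : Finset (Finset E)) : Prop :=
  B.Nonempty ∧
    ∀ S ∈ B, ∀ S' ∈ B, ∀ e ∈ S \ S',
      ∃ f ∈ S' \ S, insert f (S.erase e) ∈ B

/-- The set `N_e(σ)` of players choosing resource `e` in the strategy profile `σ`. -/
def playersOn {N E : Type*} [Fintype N] [DecidableEq E]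
    (σ : N → Finset E) (e : E) : Finset N :=
  Finset.univ.filter (fun i => e ∈ σ i)

/-- The cost `γ_i(σ) = α_i · ∑_{e ∈ σ i} ℓ_e(N_e(σ)) + (1-α_i) · max_{e ∈ σ i} b_e(N_e(σ))`
imposed on player `i` in a congestion game with mixed and set-functional costs. -/
noncomputable def mixedSetCost {N E : Type*} [Fintype N] [DecidableEq E]
    (ℓ b : E → Finset N → NNReal) (α : N → NNReal)
    (σ : N → Finset E) (i : N) : NNReal :=
  α i * (∑ e ∈ σ i, ℓ e (playersOn σ e)) +
    (1 - α i) * (σ i).sup (fun e => b e (playersOn σ e))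

section Aux

variable {E : Type*} [DecidableEq E]

/-- Induction over the symmetric difference: if a base `S'` has strictly smaller
`w`-sum (restricted to the differences) than `S`, then there exists a base `T`
and `e ∈ S \ T` s.t. every element of `T \ S` has `w`-value strictly less than `w e`. -/
lemma exch_sum {B : Finset (Finset E)} (hB : IsBaseFamily B) (w : E → NNReal)
    {S : Finset E} (hS : S ∈ B) :
    ∀ n : ℕ, ∀ S' ∈ B, (S' \ S).card ≤ n →
      (∑ g ∈ S' \ S, w g) < (∑ g ∈ S \ S', w g) →
      ∃ T ∈ B, ∃ e ∈ S \ T, ∀ f ∈ T \ S, w f < w e := by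
  intro n
  induction n with
  | zero =>
    intro S' hS' hcard hsum
    have hempty : S' \ S = ∅ := card_eq_zero.mp (Nat.le_zero.mp hcard)
    have hne : (S \ S').Nonempty := by
      rcases (S \ S').eq_empty_or_nonempty with h | h
      · rw [h, sum_empty] at hsum; exact absurd hsum (by simp)
      · exact h
    obtain ⟨e₀, he₀, _⟩ := Finset.exists_max_image (S \ S') w hne
    exact ⟨S', hS', e₀, he₀, by rw [hempty]; intro f hf; exact absurd hf (notMem_empty f)⟩
  | succ n IH =>
    intro S' hS' hcard hsum
    have hne : (S \ S').Nonempty := by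
      rcases (S \ S').eq_empty_or_nonempty with h | h
      · rw [h, sum_empty] at hsum; exact absurd hsum (by simp)
      · exact h
    obtain ⟨e₀, he₀, he₀max⟩ := Finset.exists_max_image (S \ S') w hne
    by_cases hA : ∀ f ∈ S' \ S, w f < w e₀
    · exact ⟨S', hS', e₀, he₀, hA⟩
    · push_neg at hA
      obtain ⟨f₀, hf₀, hwf₀⟩ := hA
      obtain ⟨e₁, he₁, hT⟩ := hB.2 S' hS' S hS f₀ hf₀
      have hf₀S : f₀ ∉ S := (mem_sdiff.mp hf₀).2
      have hf₀S' : f₀ ∈ S' := (mem_sdiff.mp hf₀).1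
      have he₁S : e₁ ∈ S := (mem_sdiff.mp he₁).1
      have he₁S' : e₁ ∉ S' := (mem_sdiff.mp he₁).2
      set S'' := insert e₁ (S'.erase f₀) with hS''def
      have h1 : S'' \ S = (S' \ S).erase f₀ := by
        ext x
        simp only [hS''def, mem_sdiff, mem_insert, mem_erase]
        constructor
        · rintro ⟨h | ⟨hx1, hx2⟩, hxS⟩
          · exact absurd (h ▸ he₁S) hxS
          · exact ⟨hx1, hx2, hxS⟩
        · rintro ⟨hx1, hx2, hx3⟩
          exact ⟨Or.inr ⟨hx1, hx2⟩, hx3⟩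
      have h2 : S \ S'' = (S \ S').erase e₁ := by
        ext x
        rcases eq_or_ne x f₀ with rfl | hxf
        · simp [hS''def, hf₀S]
        · rcases eq_or_ne x e₁ with rfl | hxe
          · simp [hS''def]
          · simp [hS''def, hxf, hxe]
      have hcard' : (S'' \ S).card ≤ n := by
        rw [h1, card_erase_of_mem hf₀]
        omega
      have hsum' : (∑ g ∈ S'' \ S, w g) < (∑ g ∈ S \ S'', w g) := by
        rw [h1, h2]
        have l := Finset.sum_erase_add (S' \ S) w hf₀
        have r := Finset.sum_erase_add (S \ S') w he₁
        have key : (∑ g ∈ (S' \ S).erase f₀, w g) + w f₀ <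
            (∑ g ∈ (S \ S').erase e₁, w g) + w f₀ := by
          calc (∑ g ∈ (S' \ S).erase f₀, w g) + w f₀ = ∑ g ∈ S' \ S, w g := l
            _ < ∑ g ∈ S \ S', w g := hsum
            _ = (∑ g ∈ (S \ S').erase e₁, w g) + w e₁ := r.symm
            _ ≤ (∑ g ∈ (S \ S').erase e₁, w g) + w f₀ :=
                add_le_add_right (le_trans (he₀max e₁ he₁) hwf₀) _
        exact lt_of_add_lt_add_right key
      exact IH S'' hT hcard' hsum'

lemma improving_move {B : Finset (Finset E)} (hB : IsBaseFamily B) (w : E → NNReal)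
    {S S' : Finset E} (hS : S ∈ B) (hS' : S' ∈ B)
    (h : (∑ g ∈ S', w g) < (∑ g ∈ S, w g) ∨ S'.sup w < S.sup w) :
    ∃ T ∈ B, ∃ e ∈ S \ T, ∀ f ∈ T \ S, w f < w e := by
  rcases h with hsum | hmax
  · have hd : (∑ g ∈ S' \ S, w g) < (∑ g ∈ S \ S', w g) := by
      have e1 := Finset.sum_inter_add_sum_sdiff S' S w
      have e2 := Finset.sum_inter_add_sum_sdiff S S' w
      rw [← e1, ← e2, inter_comm S S'] at hsum
      exact lt_of_add_lt_add_left hsum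
    exact exch_sum hB w hS (S' \ S).card S' hS' le_rfl hd
  · have hSne : S.Nonempty := by
      rcases S.eq_empty_or_nonempty with h | h
      · rw [h, sup_empty] at hmax; exact absurd hmax (by simp)
      · exact h
    obtain ⟨e, heS, hesup⟩ := Finset.exists_mem_eq_sup S hSne w
    have he' : e ∉ S' := by
      intro h
      exact absurd (hesup ▸ hmax) (not_lt.mpr (Finset.le_sup h))
    obtain ⟨f, hf, hTB⟩ := hB.2 S hS S' hS' e (mem_sdiff.mpr ⟨heS, he'⟩)
    have hfS : f ∉ S := (mem_sdiff.mp hf).2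
    have hfS' : f ∈ S' := (mem_sdiff.mp hf).1
    refine ⟨insert f (S.erase e), hTB, e, ?_, ?_⟩
    · rw [mem_sdiff]
      refine ⟨heS, ?_⟩
      simp only [mem_insert, mem_erase]
      rintro (rfl | ⟨h1, _⟩)
      · exact hfS heS
      · exact h1 rfl
    · intro f' hf'
      have : f' = f := by
        rcases mem_insert.mp (mem_sdiff.mp hf').1 with h | h
        · exact h
        · exact absurd (mem_of_mem_erase h) (mem_sdiff.mp hf').2
      subst this
      calc w f' ≤ S'.sup w := Finset.le_sup hfS'
        _ < S.sup w := hmax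
        _ = w e := hesup

end Aux

section Pot

variable {N E : Type*} [Fintype N] [DecidableEq N] [Fintype E] [DecidableEq E]

/-- rank of a value among all possible `ℓ`-values -/
noncomputable def rnk (ℓ : E → Finset N → NNReal) (v : NNReal) : ℕ :=
  ((Finset.univ.image (fun p : E × Finset N => ℓ p.1 p.2)).filter (fun x => x < v)).card

lemma rnk_mono (ℓ : E → Finset N → NNReal) {v v' : NNReal} (h : v ≤ v') :
    rnk ℓ v ≤ rnk ℓ v' :=
  card_le_card (fun x hx => by
    simp only [mem_filter] at hx ⊢
    exact ⟨hx.1, lt_of_lt_of_le hx.2 h⟩)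

lemma rnk_strict (ℓ : E → Finset N → NNReal) {e : E} {X : Finset N} {v' : NNReal}
    (h : ℓ e X < v') : rnk ℓ (ℓ e X) < rnk ℓ v' := by
  apply card_lt_card
  constructor
  · intro x hx
    simp only [mem_filter] at hx ⊢
    exact ⟨hx.1, lt_trans hx.2 h⟩
  · intro hsub
    have : ℓ e X ∈ (Finset.univ.image (fun p : E × Finset N => ℓ p.1 p.2)).filter
        (fun x => x < v') := by
      simp only [mem_filter, mem_image]
      exact ⟨⟨(e, X), mem_univ _, rfl⟩, h⟩
    have := hsub this
    simp only [mem_filter] at this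
    exact lt_irrefl _ this.2

noncomputable def pot (ℓ : E → Finset N → NNReal) (σ : N → Finset E) : ℕ :=
  ∑ p ∈ (Finset.univ : Finset (N × E)),
    if p.2 ∈ σ p.1 then
      (Fintype.card N * Fintype.card E + 1) ^ (rnk ℓ (ℓ p.2 (playersOn σ p.2)))
    else 0

lemma playersOn_update_mem (σ : N → Finset E) (i : N) (T : Finset E) {g : E}
    (hg : g ∈ T) : playersOn (Function.update σ i T) g = insert i (playersOn σ g) := by
  ext j
  simp only [playersOn, mem_filter, mem_univ, true_and, mem_insert]
  rcases eq_or_ne j i with rfl | hj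
  · simp [Function.update_self, hg]
  · simp [Function.update_of_ne hj, hj]

lemma playersOn_update_subset (σ : N → Finset E) (i : N) (T : Finset E) {g : E}
    (hg : g ∈ T → g ∈ σ i) : playersOn (Function.update σ i T) g ⊆ playersOn σ g := by
  intro j hj
  simp only [playersOn, mem_filter, mem_univ, true_and] at hj ⊢
  rcases eq_or_ne j i with rfl | hne
  · rw [Function.update_self] at hj; exact hg hj
  · rwa [Function.update_of_ne hne] at hj

end Pot

section Main

variable {N E : Type*} [Fintype N] [DecidableEq N] [Fintype E] [DecidableEq E]

lemma cost_update (ℓ b : E → Finset N → NNReal) (α : N → NNReal) (σ : N → Finset E)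
    (i : N) (S'' : Finset E) :
    mixedSetCost ℓ b α (Function.update σ i S'') i =
      α i * (∑ g ∈ S'', ℓ g (insert i (playersOn σ g))) +
        (1 - α i) * S''.sup (fun g => b g (insert i (playersOn σ g))) := by
  unfold mixedSetCost
  rw [Function.update_self]
  congr 1
  · congr 1
    exact Finset.sum_congr rfl (fun g hg => by rw [playersOn_update_mem σ i S'' hg])
  · congr 1
    exact Finset.sup_congr rfl (fun g hg => by rw [playersOn_update_mem σ i S'' hg])

lemma pot_decrease (ℓ : E → Finset N → NNReal)
    (hℓ : ∀ e, ∀ X Y : Finset N, X ⊆ Y → ℓ e X ≤ ℓ e Y)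
    (σ : N → Finset E) (i : N) (T : Finset E) {e : E}
    (heS : e ∈ σ i) (heT : e ∉ T)
    (hfw : ∀ f ∈ T \ σ i, ℓ f (insert i (playersOn σ f)) < ℓ e (playersOn σ e)) :
    pot ℓ (Function.update σ i T) < pot ℓ σ := by
  set c := Fintype.card N * Fintype.card E + 1 with hc
  set σ' := Function.update σ i T with hσ'
  set R := rnk ℓ (ℓ e (playersOn σ e)) with hR
  set t' : N × E → ℕ := fun p =>
    if p.2 ∈ σ' p.1 then c ^ rnk ℓ (ℓ p.2 (playersOn σ' p.2)) else 0 with ht'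
  set t : N × E → ℕ := fun p =>
    if p.2 ∈ σ p.1 then c ^ rnk ℓ (ℓ p.2 (playersOn σ p.2)) else 0 with ht
  have hcpos : 0 < c := Nat.succ_pos _
  have hc1 : 1 ≤ c := hcpos
  have hpot' : pot ℓ σ' = ∑ p ∈ (Finset.univ : Finset (N × E)), t' p := rfl
  have hpot : pot ℓ σ = ∑ p ∈ (Finset.univ : Finset (N × E)), t p := rfl
  have key : ∀ p ∈ (Finset.univ : Finset (N × E)).erase (i, e),
      c * t' p ≤ c * t p + c ^ R := by
    rintro ⟨j, g⟩ _
    by_cases hg2 : g ∈ T ∧ g ∉ σ i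
    · -- resource newly used by player i
      have hP : playersOn σ' g = insert i (playersOn σ g) :=
        playersOn_update_mem σ i T hg2.1
      have hrnk : rnk ℓ (ℓ g (playersOn σ' g)) < R := by
        rw [hP]
        exact rnk_strict ℓ (hfw g (mem_sdiff.mpr hg2))
      have ht'le : t' (j, g) ≤ c ^ rnk ℓ (ℓ g (playersOn σ' g)) := by
        simp only [ht']
        split
        · exact le_rfl
        · exact Nat.zero_le _
      calc c * t' (j, g) ≤ c * c ^ rnk ℓ (ℓ g (playersOn σ' g)) :=
            Nat.mul_le_mul_left c ht'le
        _ = c ^ (rnk ℓ (ℓ g (playersOn σ' g)) + 1) := by ring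
        _ ≤ c ^ R := Nat.pow_le_pow_right hc1 hrnk
        _ ≤ c * t (j, g) + c ^ R := Nat.le_add_left _ _
    · -- playersOn can only shrink
      have hg2' : g ∈ T → g ∈ σ i := by
        intro h
        by_contra h'
        exact hg2 ⟨h, h'⟩
      by_cases hg1 : g ∈ σ' j
      · have hgj : g ∈ σ j := by
          rcases eq_or_ne j i with rfl | hj
          · exact hg2' (by rwa [hσ', Function.update_self] at hg1)
          · rwa [hσ', Function.update_of_ne hj] at hg1
        have hsub : playersOn σ' g ⊆ playersOn σ g :=
          playersOn_update_subset σ i T hg2'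
        have hmono : rnk ℓ (ℓ g (playersOn σ' g)) ≤ rnk ℓ (ℓ g (playersOn σ g)) :=
          rnk_mono ℓ (hℓ g _ _ hsub)
        have : t' (j, g) ≤ t (j, g) := by
          simp only [ht', ht, if_pos hg1, if_pos hgj]
          exact Nat.pow_le_pow_right hc1 hmono
        calc c * t' (j, g) ≤ c * t (j, g) := Nat.mul_le_mul_left c this
          _ ≤ c * t (j, g) + c ^ R := Nat.le_add_right _ _
      · simp [ht', hg1]
  have ht'e : t' (i, e) = 0 := by
    simp only [ht', hσ']
    rw [if_neg]
    simpa using heT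
  have hte : t (i, e) = c ^ R := by
    simp only [ht]
    rw [if_pos heS]
  have hcard : ((Finset.univ : Finset (N × E)).erase (i, e)).card < c := by
    rw [card_erase_of_mem (mem_univ _), Finset.card_univ, Fintype.card_prod]
    omega
  have main : c * pot ℓ σ' < c * pot ℓ σ := by
    calc c * pot ℓ σ'
        = c * t' (i, e) + ∑ p ∈ (Finset.univ : Finset (N × E)).erase (i, e), c * t' p := by
          rw [hpot', Finset.mul_sum,
            ← Finset.add_sum_erase _ (fun p => c * t' p) (mem_univ ((i, e) : N × E))]
      _ = ∑ p ∈ (Finset.univ : Finset (N × E)).erase (i, e), c * t' p := by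
          rw [ht'e, Nat.mul_zero, Nat.zero_add]
      _ ≤ ∑ p ∈ (Finset.univ : Finset (N × E)).erase (i, e), (c * t p + c ^ R) :=
          Finset.sum_le_sum key
      _ = (∑ p ∈ (Finset.univ : Finset (N × E)).erase (i, e), c * t p) +
            ((Finset.univ : Finset (N × E)).erase (i, e)).card * c ^ R := by
          rw [Finset.sum_add_distrib, Finset.sum_const, smul_eq_mul]
      _ < (∑ p ∈ (Finset.univ : Finset (N × E)).erase (i, e), c * t p) + c * c ^ R := by
          exact Nat.add_lt_add_left
            (Nat.mul_lt_mul_of_lt_of_le hcard le_rfl (pow_pos hcpos R)) _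
      _ = c * t (i, e) + ∑ p ∈ (Finset.univ : Finset (N × E)).erase (i, e), c * t p := by
          rw [hte]; ring
      _ = c * pot ℓ σ := by
          rw [hpot, Finset.mul_sum,
            ← Finset.add_sum_erase _ (fun p => c * t p) (mem_univ ((i, e) : N × E))]
  exact Nat.lt_of_mul_lt_mul_left main

end Main



/-- Every matroid congestion game with mixed and set-functional costs whose cost
functions have monotone dependence has a pure Nash equilibrium. -/
theorem matroid_congestion_game_mixed_set_functional_costs_monotone_dependence_has_PNE
    {N E : Type*} [Fintype N] [DecidableEq N] [Fintype E] [DecidableEq E]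
    (𝒮 : N → Finset (Finset E)) (hmatroid : ∀ i, IsBaseFamily (𝒮 i))
    (ℓ b : E → Finset N → NNReal)
    (hℓ : ∀ e, ∀ X Y : Finset N, X ⊆ Y → ℓ e X ≤ ℓ e Y)
    (hb : ∀ e, ∀ X Y : Finset N, X ⊆ Y → b e X ≤ b e Y)
    (α : N → NNReal) (hα : ∀ i, α i ≤ 1)
    (hdep : ∃ d : NNReal → NNReal, Monotone d ∧ ∀ e N', b e N' = d (ℓ e N')) :
    ∃ σ : N → Finset E, (∀ i, σ i ∈ 𝒮 i) ∧
      ∀ i : N, ∀ S' ∈ 𝒮 i,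
        mixedSetCost ℓ b α σ i ≤ mixedSetCost ℓ b α (Function.update σ i S') i := by
  classical
  obtain ⟨d, hd, hbd⟩ := hdep
  obtain ⟨σ₀, hσ₀⟩ : ∃ σ : N → Finset E, ∀ i, σ i ∈ 𝒮 i :=
    ⟨fun i => ((hmatroid i).1).choose, fun i => ((hmatroid i).1).choose_spec⟩
  obtain ⟨σ, hσmem, hσmin⟩ := Finset.exists_min_image
    ((Finset.univ : Finset (N → Finset E)).filter (fun τ => ∀ j, τ j ∈ 𝒮 j)) (pot ℓ)
    ⟨σ₀, by simp [hσ₀]⟩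
  have hσ : ∀ j, σ j ∈ 𝒮 j := (Finset.mem_filter.mp hσmem).2
  refine ⟨σ, hσ, ?_⟩
  intro i S' hS'
  by_contra hlt
  push_neg at hlt
  set w : E → NNReal := fun g => ℓ g (insert i (playersOn σ g)) with hw
  have hcost : ∀ X : Finset E, mixedSetCost ℓ b α (Function.update σ i X) i =
      α i * (∑ g ∈ X, w g) + (1 - α i) * X.sup (fun g => d (w g)) := by
    intro X
    rw [cost_update]
    have hbw : ∀ g, b g (insert i (playersOn σ g)) = d (w g) := fun g => hbd g _
    simp only [hbw, hw]
  have hself : mixedSetCost ℓ b α σ i =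
      α i * (∑ g ∈ σ i, w g) + (1 - α i) * (σ i).sup (fun g => d (w g)) := by
    conv_lhs => rw [← Function.update_eq_self i σ]
    exact hcost (σ i)
  rw [hcost S', hself] at hlt
  have hor : (∑ g ∈ S', w g) < (∑ g ∈ σ i, w g) ∨ S'.sup w < (σ i).sup w := by
    by_contra hno
    push_neg at hno
    obtain ⟨h1, h2⟩ := hno
    have hsup : (σ i).sup (fun g => d (w g)) ≤ S'.sup (fun g => d (w g)) := by
      rcases S'.eq_empty_or_nonempty with rfl | hne
      · have hempty : σ i = ∅ := by
          by_contra hne2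
          obtain ⟨x, hx⟩ := Finset.nonempty_iff_ne_empty.mpr hne2
          obtain ⟨f, hf, _⟩ := (hmatroid i).2 (σ i) (hσ i) ∅ hS' x
            (mem_sdiff.mpr ⟨hx, notMem_empty x⟩)
          exact absurd (mem_sdiff.mp hf).1 (notMem_empty f)
        simp [hempty]
      · obtain ⟨g₀, hg₀, hg₀sup⟩ := Finset.exists_mem_eq_sup S' hne w
        calc (σ i).sup (fun g => d (w g)) ≤ d ((σ i).sup w) :=
              Finset.sup_le (fun g hg => hd (Finset.le_sup hg))
          _ ≤ d (S'.sup w) := hd h2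
          _ = d (w g₀) := by rw [hg₀sup]
          _ ≤ S'.sup (fun g => d (w g)) := Finset.le_sup (f := fun g => d (w g)) hg₀
    exact absurd hlt
      (not_lt.mpr (add_le_add (mul_le_mul_right h1 _) (mul_le_mul_right hsup _)))
  obtain ⟨T, hT, e, he, hfw⟩ := improving_move (hmatroid i) w (hσ i) hS' hor
  have heS : e ∈ σ i := (mem_sdiff.mp he).1
  have heT : e ∉ T := (mem_sdiff.mp he).2
  have hwe : w e = ℓ e (playersOn σ e) := by
    have hi : i ∈ playersOn σ e := by simp [playersOn, heS]
    simp only [hw]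
    rw [Finset.insert_eq_self.mpr hi]
  have hdec : pot ℓ (Function.update σ i T) < pot ℓ σ := by
    apply pot_decrease ℓ hℓ σ i T heS heT
    intro f hf
    have h := hfw f hf
    rwa [hwe] at h
  have hvalid : Function.update σ i T ∈
      ((Finset.univ : Finset (N → Finset E)).filter (fun τ => ∀ j, τ j ∈ 𝒮 j)) := by
    rw [Finset.mem_filter]
    refine ⟨mem_univ _, fun j => ?_⟩
    rcases eq_or_ne j i with rfl | hj
    · rwa [Function.update_self]
    · rw [Function.update_of_ne hj]; exact hσ j
  exact absurd (hσmin _ hvalid) (not_le.mpr hdec)
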